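/- arXiv:1406.5481 — 2 statements merged into one kernel-verified Lean document; each statement's English description precedes it below -/
import Mathlib

section
/- The closeness centrality is sensitive: for every finite simple connected graph G and every edge e = {u,v} of G, the closeness centrality of u in G is strictly greater than the closeness centrality of u in G with e removed (where terms for vertices unreachable are taken as 0, i.e., 2^{-∞} = 0). -/
/-! Every term `2^{-d(u,w)}` of the closeness centrality can only shrink when edges are deleted,
since distances can only grow (or become infinite). The term at the neighbour `v` drops strictly:
from `1/2` to at most `1/4`, or to `0` when `v` becomes unreachable. -/

open SimpleGraph
open scoped Classical

/-- Closeness centrality: `CC(G,v) = ∑_{w ≠ v} 2^{-d(v,w)}`, with the term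
taken to be `0` when `w` is unreachable from `v`. -/
noncomputable def CC {V : Type*} [Fintype V] (G : SimpleGraph V) (v : V) : ℝ :=
  ∑ w ∈ Finset.univ.erase v,
    if G.Reachable v w then ((2 : ℝ)⁻¹) ^ (G.dist v w) else 0

section

variable {V : Type*} {G H : SimpleGraph V} {u v : V}

noncomputable def closenessWeight (G : SimpleGraph V) (v w : V) : ℝ :=
  if G.Reachable v w then ((2 : ℝ)⁻¹) ^ (G.dist v w) else 0

lemma CC_eq_sum_closenessWeight [Fintype V] (G : SimpleGraph V) (v : V) :
    CC G v = ∑ w ∈ Finset.univ.erase v, closenessWeight G v w := by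
  -- not `rfl`: with `[Fintype V]` in scope, `CC` uses a different `Decidable (G.Reachable v w)` instance
  unfold CC closenessWeight
  congr!

lemma closenessWeight_anti (hle : H ≤ G) (u w : V) :
    closenessWeight H u w ≤ closenessWeight G u w := by
  unfold closenessWeight
  by_cases hH : H.Reachable u w
  · rw [if_pos hH, if_pos (hH.mono hle)]
    exact pow_le_pow_of_le_one (by norm_num) (by norm_num) (hH.dist_anti hle)
  · rw [if_neg hH]
    split_ifs <;> positivity

lemma closenessWeight_of_adj (h : G.Adj u v) : closenessWeight G u v = 2⁻¹ := by
  rw [closenessWeight, if_pos h.reachable, dist_eq_one_iff_adj.mpr h, pow_one]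

lemma closenessWeight_lt_of_ne_of_not_adj (hne : u ≠ v) (hna : ¬H.Adj u v) :
    closenessWeight H u v < 2⁻¹ := by
  unfold closenessWeight
  split_ifs with hr
  · calc ((2 : ℝ)⁻¹) ^ H.dist u v ≤ 2⁻¹ ^ 2 :=
          pow_le_pow_of_le_one (by norm_num) (by norm_num)
            (hr.one_lt_dist_of_ne_of_not_adj hne hna)
      _ < 2⁻¹ := by norm_num
  · norm_num

lemma CC_lt_CC_of_le_of_adj_of_not_adj [Fintype V] (hle : H ≤ G) (hG : G.Adj u v)
    (hH : ¬H.Adj u v) : CC H u < CC G u := by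
  rw [CC_eq_sum_closenessWeight, CC_eq_sum_closenessWeight]
  refine Finset.sum_lt_sum (fun w _ ↦ closenessWeight_anti hle u w)
    ⟨v, Finset.mem_erase.mpr ⟨hG.ne', Finset.mem_univ v⟩, ?_⟩
  rw [closenessWeight_of_adj hG]
  exact closenessWeight_lt_of_ne_of_not_adj hG.ne hH

end

theorem closeness_centrality_sensitive_general {V : Type*} [Fintype V]
    (G : SimpleGraph V) (u v : V) (h : G.Adj u v) :
    CC (G.deleteEdges {s(u, v)}) u < CC G u :=
  CC_lt_CC_of_le_of_adj_of_not_adj (G.deleteEdges_le _) h (by simp)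

theorem closeness_centrality_sensitive {V : Type*} [Fintype V]
    (G : SimpleGraph V) (hG : G.Connected) (u v : V) (h : G.Adj u v) :
    CC (G.deleteEdges {s(u, v)}) u < CC G u :=
  closeness_centrality_sensitive_general G u v h
end

section
/- Exact equals approximate closeness distance for nested graphs: if E(G₁) ⊆ E(G₂), then the closeness-centrality distance d_CC(G₁,G₂) (the shortest weighted path in the graph-of-graphs with step cost Σ_v |CC(H,v) − CC(H',v)|) equals Σ_{v∈V} (CC(G₂,v) − CC(G₁,v)), and every topological shortest path (adding exactly the edges of E(G₂)\E(G₁) one by one, in any order) achieves this minimum. -/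
open SimpleGraph
open scoped Classical

def GGAdj {V : Type*} (G G' : SimpleGraph V) : Prop :=
  (symmDiff G.edgeSet G'.edgeSet).ncard = 1

noncomputable def stepCost {V : Type*} [Fintype V]
    (C : SimpleGraph V → V → ℝ) (G G' : SimpleGraph V) : ℝ :=
  ∑ v : V, |C G v - C G' v|

noncomputable def dC {V : Type*} [Fintype V]
    (C : SimpleGraph V → V → ℝ) (G₁ G₂ : SimpleGraph V) : ℝ :=
  sInf { c : ℝ | ∃ (k : ℕ) (H : Fin (k + 1) → SimpleGraph V),
    H 0 = G₁ ∧ H (Fin.last k) = G₂ ∧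
    (∀ i : Fin k, GGAdj (H i.castSucc) (H i.succ)) ∧
    c = ∑ i : Fin k, stepCost C (H i.castSucc) (H i.succ) }

/-!
Adding edges only shortens distances, so closeness centrality is monotone under edge addition.
Along a path of graphs that only adds edges every step cost is therefore a signed difference, and
the total cost telescopes to `∑ v, (CC G₂ v - CC G₁ v)`. Along an arbitrary path the same quantity
is a lower bound, by the triangle inequality at each vertex. Adding the edges of `G₂` missing from
`G₁` one at a time gives such a monotone path, so the infimum defining `dC` is attained by it.
-/

theorem Fin.sum_succ_sub_castSucc {M : Type*} [AddCommGroup M] :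
    ∀ {k : ℕ} (f : Fin (k + 1) → M),
      ∑ i : Fin k, (f i.succ - f i.castSucc) = f (Fin.last k) - f 0
  | 0, f => by simp
  | k + 1, f => by
    rw [Fin.sum_univ_castSucc]
    have ih := Fin.sum_succ_sub_castSucc (f ∘ Fin.castSucc)
    simp only [Function.comp_apply, ← Fin.succ_castSucc] at ih
    rw [ih, Fin.castSucc_zero, Fin.succ_last]
    abel

section PathCost

variable {V : Type*} [Fintype V] (C : SimpleGraph V → V → ℝ)

theorem sum_sub_le_pathCost {k : ℕ} (H : Fin (k + 1) → SimpleGraph V) :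
    ∑ v, (C (H (Fin.last k)) v - C (H 0) v) ≤
      ∑ i : Fin k, stepCost C (H i.castSucc) (H i.succ) := by
  simp only [stepCost]
  rw [Finset.sum_comm]
  refine Finset.sum_le_sum fun v _ => ?_
  rw [← Fin.sum_succ_sub_castSucc (fun i => C (H i) v)]
  refine (le_abs_self _).trans ((Finset.abs_sum_le_sum_abs _ _).trans_eq ?_)
  simp only [abs_sub_comm]

theorem pathCost_eq_sum_sub_of_monotone (hC : ∀ v, Monotone (C · v)) {k : ℕ}
    (H : Fin (k + 1) → SimpleGraph V) (hH : ∀ i : Fin k, H i.castSucc ≤ H i.succ) :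
    ∑ i : Fin k, stepCost C (H i.castSucc) (H i.succ) =
      ∑ v, (C (H (Fin.last k)) v - C (H 0) v) := by
  have hstep (i : Fin k) (v : V) : |C (H i.castSucc) v - C (H i.succ) v| =
      C (H i.succ) v - C (H i.castSucc) v := by
    rw [abs_sub_comm, abs_of_nonneg (sub_nonneg.2 (hC v (hH i)))]
  simp only [stepCost, hstep]
  rw [Finset.sum_comm]
  exact Finset.sum_congr rfl fun v _ => Fin.sum_succ_sub_castSucc (fun i => C (H i) v)

end PathCost

theorem CC_mono {V : Type*} [Fintype V] (v : V) : Monotone (CC · v) := by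
  intro G G' hle
  refine Finset.sum_le_sum fun w _ => ?_
  by_cases hr : G.Reachable v w
  · have hdist : G'.dist v w ≤ G.dist v w := by
      obtain ⟨p, hp⟩ := hr.exists_walk_length_eq_dist
      calc G'.dist v w ≤ (p.mapLe hle).length := dist_le _
        _ = G.dist v w := by simp [hp]
    simp only [hr, hr.mono hle, if_true]
    exact pow_le_pow_of_le_one (by norm_num) (by norm_num) hdist
  · simp only [hr, if_false]
    split_ifs <;> positivity

theorem ggAdj_of_edgeSet_eq_insert {V : Type*} {G G' : SimpleGraph V} {e : Sym2 V}
    (he : e ∉ G.edgeSet) (hG' : G'.edgeSet = insert e G.edgeSet) : GGAdj G G' := by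
  rw [GGAdj, hG', symmDiff_of_le (Set.subset_insert e _), Set.insert_sdiff_eq_singleton he,
    Set.ncard_singleton]

namespace SimpleGraph

variable {V : Type*}

theorem le_of_edgeSet_eq_insert {G G' : SimpleGraph V} {e : Sym2 V}
    (hG' : G'.edgeSet = insert e G.edgeSet) : G ≤ G' :=
  edgeSet_subset_edgeSet.mp (hG' ▸ Set.subset_insert e G.edgeSet)

theorem exists_insert_edge_path [Finite V] (n : ℕ) :
    ∀ {G₁ G₂ : SimpleGraph V}, G₁ ≤ G₂ → (G₂.edgeSet \ G₁.edgeSet).ncard = n →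
      ∃ (k : ℕ) (H : Fin (k + 1) → SimpleGraph V), H 0 = G₁ ∧ H (Fin.last k) = G₂ ∧
        ∀ i : Fin k, ∃ e ∉ (H i.castSucc).edgeSet,
          (H i.succ).edgeSet = insert e (H i.castSucc).edgeSet := by
  induction n with
  | zero =>
    intro G₁ G₂ hle hcard
    have hsub : G₂.edgeSet ⊆ G₁.edgeSet :=
      Set.sdiff_eq_empty.mp ((Set.ncard_eq_zero (Set.toFinite _)).mp hcard)
    exact ⟨0, fun _ => G₁, rfl, le_antisymm hle (edgeSet_subset_edgeSet.mp hsub), nofun⟩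
  | succ n ih =>
    intro G₁ G₂ hle hcard
    obtain ⟨e, he⟩ : (G₂.edgeSet \ G₁.edgeSet).Nonempty :=
      Set.nonempty_of_ncard_ne_zero (by omega)
    set G₂' := G₂.deleteEdges {e}
    have hle' : G₁ ≤ G₂' := by
      rw [← edgeSet_subset_edgeSet, edgeSet_deleteEdges]
      exact Set.subset_sdiff_singleton (edgeSet_mono hle) he.2
    have hcard' : (G₂'.edgeSet \ G₁.edgeSet).ncard = n := by
      rw [edgeSet_deleteEdges, Set.sdiff_sdiff_comm, Set.ncard_sdiff_singleton_of_mem he, hcard,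
        Nat.add_sub_cancel]
    obtain ⟨k, H, h0, hlast, hsteps⟩ := ih hle' hcard'
    refine ⟨k + 1, Fin.snoc H G₂, by simpa using h0, Fin.snoc_last _ _, ?_⟩
    intro i
    induction i using Fin.lastCases with
    | last =>
      rw [Fin.snoc_castSucc, Fin.succ_last, Fin.snoc_last, hlast, edgeSet_deleteEdges]
      exact ⟨e, fun h => h.2 rfl, (Set.insert_sdiff_self_of_mem he.1).symm⟩
    | cast j =>
      rw [Fin.succ_castSucc, Fin.snoc_castSucc, Fin.snoc_castSucc]
      exact hsteps j

end SimpleGraph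

theorem dC_CC_of_le {V : Type*} [Fintype V] {G₁ G₂ : SimpleGraph V} (h : G₁ ≤ G₂) :
    dC CC G₁ G₂ = ∑ v, (CC G₂ v - CC G₁ v) := by
  refine IsLeast.csInf_eq ⟨?_, ?_⟩
  · obtain ⟨k, H, h0, hlast, hsteps⟩ := exists_insert_edge_path _ h rfl
    choose e he hH using hsteps
    refine ⟨k, H, h0, hlast, fun i => ggAdj_of_edgeSet_eq_insert (he i) (hH i), ?_⟩
    rw [pathCost_eq_sum_sub_of_monotone CC CC_mono H fun i => le_of_edgeSet_eq_insert (hH i),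
      h0, hlast]
  · rintro c ⟨k, H, rfl, rfl, -, rfl⟩
    exact sum_sub_le_pathCost CC H

theorem closeness_distance_nested {V : Type*} [Fintype V]
    (G₁ G₂ : SimpleGraph V) (h : G₁ ≤ G₂) :
    dC CC G₁ G₂ = ∑ v : V, (CC G₂ v - CC G₁ v) ∧
    ∀ (k : ℕ) (H : Fin (k + 1) → SimpleGraph V),
      H 0 = G₁ → H (Fin.last k) = G₂ →
      (∀ i : Fin k, ∃ e ∈ G₂.edgeSet \ G₁.edgeSet,
        (H i.succ).edgeSet = insert e (H i.castSucc).edgeSet) →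
      ∑ i : Fin k, stepCost CC (H i.castSucc) (H i.succ) = dC CC G₁ G₂ := by
  refine ⟨dC_CC_of_le h, fun k H h0 hlast hsteps => ?_⟩
  choose _ _ hH using hsteps
  rw [dC_CC_of_le h, pathCost_eq_sum_sub_of_monotone CC CC_mono H
    fun i => le_of_edgeSet_eq_insert (hH i), h0, hlast]
end
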